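/- arXiv:2106.02937 — 5 statements merged into one kernel-verified Lean document; each statement's English description precedes it below -/
import Mathlib

section
/- For the ROWJFA with states q0,q1,q2,q3, start state q0, accepting state q2, and rules (q0,b,q1),(q0,a,q2),(q2,a,q3),(q3,b,q2), the accepted language is exactly { a·w : w ∈ {a,b}*, |w|_a = |w|_b }. -/
open List

/-- Two-letter alphabet. -/
inductive AB : Type | a | b
  deriving DecidableEq, Repr

/-- Three-letter alphabet. -/
inductive ABC : Type | a | b | c
  deriving DecidableEq, Repr

instance : Fintype AB := ⟨⟨{AB.a, AB.b}, by decide⟩, by intro x; cases x <;> decide⟩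
instance : Fintype ABC := ⟨⟨{ABC.a, ABC.b, ABC.c}, by decide⟩, by intro x; cases x <;> decide⟩

/-- The Dyck language over the two designated letters `a` (open) and `b` (close):
balanced words using only `a` and `b`. -/
def Dyck {α : Type} [DecidableEq α] (a b : α) : Set (List α) :=
  {w | (∀ x ∈ w, x = a ∨ x = b) ∧ w.count a = w.count b ∧
       ∀ u, u <+: w → u.count b ≤ u.count a}

/-- `u` contains no word from `S` as a subword (infix). -/
def NoSub {α : Type} (S : Set (List α)) (u : List α) : Prop :=
  ¬ ∃ w ∈ S, w <:+: u

/-! ### Right one-way jumping finite automata -/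

structure ROWJFA (α σ : Type) where
  start : σ
  accept : Set σ
  rules : Set (σ × α × σ)
  det : ∀ p a q q', (p, a, q) ∈ rules → (p, a, q') ∈ rules → q = q'

namespace ROWJFA
variable {α σ : Type}

def sig (A : ROWJFA α σ) (p : σ) : Set α := {a | ∃ q, (p, a, q) ∈ A.rules}

/-- `p x a y ↷ q y x` when `(p,a,q) ∈ R` and `x ∈ (Σ∖Σ_p)*`. -/
inductive Step (A : ROWJFA α σ) : σ × List α → σ × List α → Prop
  | jump {p q : σ} {a : α} (x y : List α) :
      (p, a, q) ∈ A.rules → (∀ b ∈ x, b ∉ A.sig p) →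
      Step A (p, x ++ a :: y) (q, y ++ x)

def language (A : ROWJFA α σ) : Set (List α) :=
  {w | ∃ qf ∈ A.accept, Relation.ReflTransGen (Step A) (A.start, w) (qf, [])}

end ROWJFA

def ROWJ {α : Type} (L : Set (List α)) : Prop :=
  ∃ (σ : Type) (_ : Finite σ) (A : ROWJFA α σ), A.language = L

/-! ### Left one-way jumping finite automata -/

structure LOWJFA (α σ : Type) where
  start : σ
  accept : Set σ
  /-- A rule `(q, a, p)` means: from state `p`, delete `a`, move to state `q`. -/
  rules : Set (σ × α × σ)
  det : ∀ p a q q', (q, a, p) ∈ rules → (q', a, p) ∈ rules → q = q'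

namespace LOWJFA
variable {α σ : Type}

def sig (A : LOWJFA α σ) (p : σ) : Set α := {a | ∃ q, (q, a, p) ∈ A.rules}

/-- `x y q ↶ y a x p` when `(q,a,p) ∈ R` and `x ∈ (Σ∖Σ_p)*`;
configurations are in `Σ* Q`. -/
inductive Step (A : LOWJFA α σ) : List α × σ → List α × σ → Prop
  | jump {p q : σ} {a : α} (x y : List α) :
      (q, a, p) ∈ A.rules → (∀ b ∈ x, b ∉ A.sig p) →
      Step A (y ++ a :: x, p) (x ++ y, q)

def language (A : LOWJFA α σ) : Set (List α) :=
  {w | ∃ qf ∈ A.accept, Relation.ReflTransGen (Step A) (w, A.start) ([], qf)}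

end LOWJFA

def LOWJ {α : Type} (L : Set (List α)) : Prop :=
  ∃ (σ : Type) (_ : Finite σ) (A : LOWJFA α σ), A.language = L

/-! ### Generalized right linear one-way jumping finite automata -/

structure GRLOWJFA (α σ : Type) where
  start : σ
  accept : Set σ
  rules : Set (σ × List α × σ)
  finite : rules.Finite
  ne : ∀ r ∈ rules, r.2.1 ≠ ([] : List α)
  det : ∀ p w q q', (p, w, q) ∈ rules → (p, w, q') ∈ rules → q = q'

namespace GRLOWJFA
variable {α σ : Type}

def sig (A : GRLOWJFA α σ) (p : σ) : Set (List α) := {w | ∃ q, (p, w, q) ∈ A.rules}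

/-- Configurations are triples `(t, p, v)` representing `t p v ∈ Σ* Q Σ*`. -/
inductive Step (A : GRLOWJFA α σ) :
    List α × σ × List α → List α × σ × List α → Prop
  /-- `t p u x v ↷ t u q v`. -/
  | rule {p q : σ} {x : List α} (t u v : List α) :
      (p, x, q) ∈ A.rules →
      NoSub (A.sig p) u →
      (¬ ∃ u₂ x₁ : List α, u₂ ≠ [] ∧ x₁ ≠ [] ∧ u₂ <:+ u ∧ x₁ <+: x ∧ u₂ ++ x₁ = x) →
      Step A (t, p, u ++ x ++ v) (t ++ u, q, v)
  /-- `x p y ↷ p x y`. -/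
  | ret {p : σ} (x y : List α) :
      x ≠ [] → NoSub (A.sig p) y →
      Step A (x, p, y) ([], p, x ++ y)

def language (A : GRLOWJFA α σ) : Set (List α) :=
  {w | ∃ qf ∈ A.accept, Relation.ReflTransGen (Step A) ([], A.start, w) ([], qf, [])}

end GRLOWJFA

def GRLOWJ {α : Type} (L : Set (List α)) : Prop :=
  ∃ (σ : Type) (_ : Finite σ) (A : GRLOWJFA α σ), A.language = L

/-! ### Generalized left linear one-way jumping finite automata -/

structure GLLOWJFA (α σ : Type) where
  start : σ
  accept : Set σ
  /-- A rule `(q, w, p)` means: from state `p`, delete `w`, move to state `q`. -/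
  rules : Set (σ × List α × σ)
  finite : rules.Finite
  ne : ∀ r ∈ rules, r.2.1 ≠ ([] : List α)
  det : ∀ p w q q', (q, w, p) ∈ rules → (q', w, p) ∈ rules → q = q'

namespace GLLOWJFA
variable {α σ : Type}

def sig (A : GLLOWJFA α σ) (p : σ) : Set (List α) := {w | ∃ q, (q, w, p) ∈ A.rules}

/-- Configurations are triples `(v, p, t)` representing `v p t ∈ Σ* Q Σ*`. -/
inductive Step (A : GLLOWJFA α σ) :
    List α × σ × List α → List α × σ × List α → Prop
  /-- `v q u t ↶ v x u p t`. -/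
  | rule {p q : σ} {x : List α} (t u v : List α) :
      (q, x, p) ∈ A.rules →
      NoSub (A.sig p) u →
      (¬ ∃ x₂ u₁ : List α, x₂ ≠ [] ∧ u₁ ≠ [] ∧ x₂ <:+ x ∧ u₁ <+: u ∧ x₂ ++ u₁ = x) →
      Step A (v ++ x ++ u, p, t) (v, q, u ++ t)
  /-- `y x p ↶ y p x`. -/
  | ret {p : σ} (x y : List α) :
      x ≠ [] → NoSub (A.sig p) y →
      Step A (y, p, x) (y ++ x, p, [])

def language (A : GLLOWJFA α σ) : Set (List α) :=
  {w | ∃ qf ∈ A.accept, Relation.ReflTransGen (Step A) (w, A.start, []) ([], qf, [])}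

end GLLOWJFA

def GLLOWJ {α : Type} (L : Set (List α)) : Prop :=
  ∃ (σ : Type) (_ : Finite σ) (A : GLLOWJFA α σ), A.language = L

inductive St0 : Type | q0 | q1 | q2 | q3
  deriving DecidableEq

/-- The ROWJFA of STATEMENT 0. -/
def A0 : ROWJFA AB St0 where
  start := St0.q0
  accept := {St0.q2}
  rules := {(St0.q0, AB.b, St0.q1), (St0.q0, AB.a, St0.q2),
            (St0.q2, AB.a, St0.q3), (St0.q3, AB.b, St0.q2)}
  det := by
    intro p a q q' h h'
    simp only [Set.mem_insert_iff, Set.mem_singleton_iff] at h h'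
    rcases h with h|h|h|h <;> rcases h' with h'|h'|h'|h' <;> simp_all

/-!
A jump deletes one letter and rotates the rest of the tape, so it changes the letter counts only
by the deleted letter. This yields an invariant of accepting runs (`A0.Inv`): in `q2` the tape
is balanced, in `q3` it has one more `b` than `a`, and in `q0`, where every letter is readable,
the first jump must consume the leading letter, which has to be `a` since `b` leads to the dead
state `q1`. Conversely, on a balanced tape in `q2` the automaton can read the first `a` and then
the first `b`, returning to `q2` with a shorter balanced tape.
-/

namespace ROWJFA

variable {α σ : Type} {A : ROWJFA α σ}

theorem Step.cons {p q : σ} {c : α} (hr : (p, c, q) ∈ A.rules) (w : List α) :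
    A.Step (p, c :: w) (q, w) := by
  simpa using Step.jump [] w hr (by simp)

theorem Step.perm_cons {p q : σ} {w w' : List α} (h : A.Step (p, w) (q, w')) :
    ∃ c, (p, c, q) ∈ A.rules ∧ w ~ c :: w' := by
  cases h with
  | jump x y hr _ => exact ⟨_, hr, perm_middle.trans (perm_append_comm.cons _)⟩

theorem Step.eq_cons_of_forall_mem_sig {p q : σ} {w w' : List α} (h : A.Step (p, w) (q, w'))
    (hsig : ∀ b, b ∈ A.sig p) : ∃ c, (p, c, q) ∈ A.rules ∧ w = c :: w' := by
  cases h with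
  | jump x y hr hx =>
    obtain rfl : x = [] := eq_nil_iff_forall_not_mem.2 fun b hb => hx b hb (hsig b)
    exact ⟨_, hr, by simp⟩

theorem exists_step_of_mem {p q : σ} {c : α} {w : List α} (hr : (p, c, q) ∈ A.rules)
    (hsig : ∀ b ∈ A.sig p, b = c) (hc : c ∈ w) :
    ∃ w', A.Step (p, w) (q, w') ∧ w ~ c :: w' := by
  obtain ⟨x, y, rfl, hx⟩ := eq_append_cons_of_mem hc
  exact ⟨y ++ x, .jump x y hr fun b hb hbs => hx (hsig b hbs ▸ hb),
    perm_middle.trans (perm_append_comm.cons _)⟩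

end ROWJFA

theorem AB.count_a_add_count_b (w : List AB) : w.count .a + w.count .b = w.length := by
  induction w with
  | nil => rfl
  | cons e w ih => cases e <;> simp <;> omega

namespace A0

theorem mem_sig_q0 (e : AB) : e ∈ A0.sig .q0 := by
  cases e
  exacts [⟨.q2, by simp [A0]⟩, ⟨.q1, by simp [A0]⟩]

theorem eq_of_mem_sig_q2 {e : AB} (h : e ∈ A0.sig .q2) : e = .a := by
  obtain ⟨q, hq⟩ := h
  cases e
  · rfl
  · simp [A0] at hq

theorem eq_of_mem_sig_q3 {e : AB} (h : e ∈ A0.sig .q3) : e = .b := by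
  obtain ⟨q, hq⟩ := h
  cases e
  · simp [A0] at hq
  · rfl

def Inv : St0 × List AB → Prop
  | (.q0, w) => ∃ v, w = .a :: v ∧ v.count .a = v.count .b
  | (.q1, _) => False
  | (.q2, w) => w.count .a = w.count .b
  | (.q3, w) => w.count .b = w.count .a + 1

theorem inv_of_reaches {c : St0 × List AB}
    (h : Relation.ReflTransGen A0.Step c (.q2, [])) : Inv c := by
  induction h using Relation.ReflTransGen.head_induction_on with
  | refl => simp [Inv]
  | @head c c' step _ ih =>
    obtain ⟨p, w⟩ := c
    obtain ⟨q, w'⟩ := c'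
    obtain ⟨e, hr, hperm⟩ := step.perm_cons
    simp only [A0, Set.mem_insert_iff, Set.mem_singleton_iff, Prod.mk.injEq] at hr
    rcases hr with ⟨rfl, rfl, rfl⟩ | ⟨rfl, rfl, rfl⟩ | ⟨rfl, rfl, rfl⟩ | ⟨rfl, rfl, rfl⟩
    · exact ih.elim
    · obtain ⟨e, he, rfl⟩ := step.eq_cons_of_forall_mem_sig mem_sig_q0
      obtain rfl : e = .a := by simpa [A0] using he
      exact ⟨w', rfl, ih⟩
    all_goals
      simp only [Inv, hperm.count_eq, count_cons, beq_iff_eq, reduceCtorEq, if_true, if_false]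
        at ih ⊢
      omega

theorem reaches_q2_of_count_eq (w : List AB) (hw : w.count .a = w.count .b) :
    Relation.ReflTransGen A0.Step (.q2, w) (.q2, []) := by
  rcases eq_or_ne w [] with rfl | hne
  · exact .refl
  have ha : AB.a ∈ w := by
    have := AB.count_a_add_count_b w
    have := length_pos_iff.2 hne
    exact count_pos_iff.1 (by omega)
  obtain ⟨w₁, step₁, hperm₁⟩ := ROWJFA.exists_step_of_mem (q := .q3)
    (by simp [A0]) (fun _ => eq_of_mem_sig_q2) ha
  have hw₁ : w₁.count .b = w₁.count .a + 1 := by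
    rw [hperm₁.count_eq, hperm₁.count_eq, count_cons_self, count_cons_of_ne (by simp)] at hw
    omega
  have hb : AB.b ∈ w₁ := count_pos_iff.1 (by omega)
  obtain ⟨w₂, step₂, hperm₂⟩ := ROWJFA.exists_step_of_mem (q := .q2)
    (by simp [A0]) (fun _ => eq_of_mem_sig_q3) hb
  have : w₂.length < w.length := by simp [hperm₁.length_eq, hperm₂.length_eq]
  refine .head step₁ (.head step₂ (reaches_q2_of_count_eq w₂ ?_))
  rw [hperm₂.count_eq, hperm₂.count_eq, count_cons_self, count_cons_of_ne (by simp)] at hw₁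
  omega
termination_by w.length

end A0

theorem stmt_0 :
    A0.language =
      {w : List AB | ∃ v : List AB, w = AB.a :: v ∧ v.count AB.a = v.count AB.b} := by
  ext w
  constructor
  · rintro ⟨qf, rfl, h⟩
    exact A0.inv_of_reaches h
  · rintro ⟨v, rfl, hv⟩
    exact ⟨.q2, rfl, .head (.cons (by simp [A0]) v) (A0.reaches_q2_of_count_eq v hv)⟩
end

section
/- The Dyck language over {a,b} is not accepted by any LOWJFA (left one-way jumping finite automaton). -/
open List

/-!
A LOWJFA is deterministic: in `y a x p` the deleted letter `a` is the rightmost letter of `w`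
lying in `Σ_p`, so every configuration has at most one successor, and acceptance is inherited by
every configuration reachable from an accepting one. On `aⁿbᵐ` the automaton starts by deleting
trailing `b`s, following the chain `q₀, δ_b q₀, δ_b² q₀, …` with `δ_b = A.next b`. If this chain
never gets stuck, it repeats a state, `δ_b^k q₀ = δ_b^k' q₀` with `k ≠ k'`, and `a^k b^k'` is
accepted along with `a^k b^k`. If it gets stuck first at `p = δ_b^K q₀`, then on `a^(K+1) b^(K+1)`
the automaton must delete an `a` from `a^(K+1) b p`, jumping over the last `b`, and reaches
`b a^K q` for some `q`; the non-Dyck word `b a^(K+1) b^K` reaches the same configuration.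
-/

namespace List

variable {α : Type}

theorem cons_eq_of_cons_suffix_cons_of_forall_not_mem {s : Set α} {a a' : α} {x x' : List α}
    (hx' : ∀ b ∈ x', b ∉ s) (ha : a ∈ s) (h : a :: x <:+ a' :: x') : a :: x = a' :: x' := by
  rcases suffix_cons_iff.mp h with h | h
  · exact h
  · exact absurd ha (hx' a (h.mem mem_cons_self))

theorem append_cons_inj_of_forall_not_mem {s : Set α} {a a' : α} {x x' y y' : List α}
    (hx : ∀ b ∈ x, b ∉ s) (hx' : ∀ b ∈ x', b ∉ s) (ha : a ∈ s) (ha' : a' ∈ s)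
    (h : y ++ a :: x = y' ++ a' :: x') : y = y' ∧ a = a' ∧ x = x' := by
  have hax : a :: x = a' :: x' := by
    have hs : a :: x <:+ y ++ a :: x := suffix_append y _
    have hs' : a' :: x' <:+ y ++ a :: x := h ▸ suffix_append y' _
    rcases suffix_or_suffix_of_suffix hs hs' with h | h
    · exact cons_eq_of_cons_suffix_cons_of_forall_not_mem hx' ha h
    · exact (cons_eq_of_cons_suffix_cons_of_forall_not_mem hx ha' h).symm
  obtain ⟨rfl, rfl⟩ := cons_eq_cons.mp hax
  exact ⟨append_cancel_right h, rfl, rfl⟩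

end List

namespace LOWJFA

open Relation

variable {α σ : Type} (A : LOWJFA α σ)

theorem Step.rightUnique : Relator.RightUnique A.Step := by
  rintro _ _ d ⟨x, y, hr, hx⟩ h'
  generalize hc : (y ++ _ :: x, _) = c at h'
  obtain ⟨x', y', hr', hx'⟩ := h'
  obtain ⟨hw, rfl⟩ := Prod.mk.inj hc
  obtain ⟨rfl, rfl, rfl⟩ :=
    List.append_cons_inj_of_forall_not_mem hx hx' ⟨_, hr⟩ ⟨_, hr'⟩ hw
  rw [A.det _ _ _ _ hr hr']

theorem not_step_nil {p : σ} {c : List α × σ} : ¬ A.Step ([], p) c := by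
  generalize hc : ([], p) = c'
  rintro ⟨x, y, -, -⟩
  simpa using congrArg Prod.fst hc

def Accepts (c : List α × σ) : Prop :=
  ∃ qf ∈ A.accept, ReflTransGen A.Step c ([], qf)

variable {A}

theorem mem_language_iff {w : List α} : w ∈ A.language ↔ A.Accepts (w, A.start) := Iff.rfl

theorem Accepts.of_reflTransGen {c d : List α × σ} (hcd : ReflTransGen A.Step c d)
    (hc : A.Accepts c) : A.Accepts d := by
  obtain ⟨qf, hqf, hc⟩ := hc
  refine ⟨qf, hqf, ?_⟩
  rcases ReflTransGen.total_of_right_unique (Step.rightUnique A) hcd hc with h | h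
  · exact h
  · rcases h.cases_head with h | ⟨e, he, -⟩
    · exact h ▸ .refl
    · exact absurd he (A.not_step_nil)

theorem Accepts.of_reflTransGen_left {c d : List α × σ} (hcd : ReflTransGen A.Step c d)
    (hd : A.Accepts d) : A.Accepts c :=
  let ⟨qf, hqf, hd⟩ := hd
  ⟨qf, hqf, hcd.trans hd⟩

theorem Accepts.exists_rule {w : List α} {p : σ} (hw : w ≠ []) (h : A.Accepts (w, p)) :
    ∃ a ∈ w, ∃ q, (q, a, p) ∈ A.rules := by
  obtain ⟨qf, -, h⟩ := h
  rcases h.cases_head with h | ⟨e, ⟨x, y, hr, -⟩, -⟩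
  · exact absurd (congrArg Prod.fst h) hw
  · exact ⟨_, by simp, _, hr⟩

variable (A)

open Classical in
noncomputable def next (c : α) (p : σ) : σ :=
  if h : c ∈ A.sig p then h.choose else p

theorem next_mem_rules {c : α} {p : σ} (h : c ∈ A.sig p) : (A.next c p, c, p) ∈ A.rules := by
  classical
  rw [next, dif_pos h]
  exact h.choose_spec

theorem step_append_singleton {u : List α} {c : α} {p q : σ} (h : (q, c, p) ∈ A.rules) :
    A.Step (u ++ [c], p) (u, q) := by
  simpa using Step.jump (A := A) [] u h (by simp)

theorem reflTransGen_append_replicate (u : List α) (c : α) :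
    ∀ (j : ℕ) (p : σ), (∀ i < j, c ∈ A.sig ((A.next c)^[i] p)) →
      ReflTransGen A.Step (u ++ replicate j c, p) (u, (A.next c)^[j] p)
  | 0, p, _ => by simpa using .refl
  | j + 1, p, h => by
    have hstep := A.step_append_singleton (u := u ++ replicate j c)
      (A.next_mem_rules (h 0 j.succ_pos))
    rw [append_assoc, ← replicate_succ'] at hstep
    rw [Function.iterate_succ_apply]
    refine .head hstep ?_
    exact reflTransGen_append_replicate u c j _ fun i hi => h (i + 1) (by omega)

end LOWJFA

section Dyck

open List

variable {α : Type} [DecidableEq α] {a b : α}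

theorem replicate_append_replicate_mem_dyck (hab : a ≠ b) (n : ℕ) :
    replicate n a ++ replicate n b ∈ Dyck a b := by
  refine ⟨?_, by simp [count_replicate, hab, hab.symm], fun u hu => ?_⟩
  · intro x hx
    rcases mem_append.mp hx with h | h
    · exact .inl (eq_of_mem_replicate h)
    · exact .inr (eq_of_mem_replicate h)
  · rw [prefix_iff_eq_take.mp hu, take_append, take_replicate, take_replicate]
    simp [count_replicate, hab, hab.symm]

theorem eq_of_replicate_append_replicate_mem_dyck (hab : a ≠ b) {n m : ℕ}
    (h : replicate n a ++ replicate m b ∈ Dyck a b) : n = m := by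
  simpa [count_replicate, hab, hab.symm] using h.2.1

theorem cons_not_mem_dyck (hab : a ≠ b) (w : List α) : b :: w ∉ Dyck a b := fun h => by
  simpa [hab] using h.2.2 [b] (by simp)

end Dyck

namespace LOWJFA

open List Relation

variable {α σ : Type} [DecidableEq α] {a b : α} {A : LOWJFA α σ}

theorem language_ne_dyck_of_forall_mem_sig_next [Finite σ] (hab : a ≠ b)
    (h : ∀ k, b ∈ A.sig ((A.next b)^[k] A.start)) : A.language ≠ Dyck a b := by
  intro hA
  obtain ⟨k, k', hne, heq⟩ :=
    Finite.exists_ne_map_eq_of_infinite fun k => (A.next b)^[k] A.start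
  have hrun (m : ℕ) := A.reflTransGen_append_replicate (replicate k a) b m A.start
    fun i _ => h i
  have hacc : A.Accepts (replicate k a, (A.next b)^[k] A.start) :=
    .of_reflTransGen (hrun k)
      (mem_language_iff.mp (hA ▸ replicate_append_replicate_mem_dyck hab k))
  have hmem : replicate k a ++ replicate k' b ∈ A.language :=
    mem_language_iff.mpr (.of_reflTransGen_left (hrun k') (heq ▸ hacc))
  exact hne (eq_of_replicate_append_replicate_mem_dyck hab (hA ▸ hmem))

theorem language_ne_dyck_of_not_mem_sig_next (hab : a ≠ b) {K : ℕ}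
    (hlt : ∀ i < K, b ∈ A.sig ((A.next b)^[i] A.start))
    (hK : b ∉ A.sig ((A.next b)^[K] A.start)) : A.language ≠ Dyck a b := by
  intro hA
  set p := (A.next b)^[K] A.start
  have hrun (u : List α) := A.reflTransGen_append_replicate u b K A.start hlt
  have hacc : A.Accepts (replicate (K + 1) a ++ [b], p) := by
    refine .of_reflTransGen (hrun _) ?_
    simpa [replicate_succ] using
      mem_language_iff.mp (hA ▸ replicate_append_replicate_mem_dyck hab (K + 1))
  obtain ⟨c, hc, q, hq⟩ := hacc.exists_rule (by simp)
  have hca : c = a := by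
    simp only [mem_append, mem_replicate, mem_singleton] at hc
    rcases hc with ⟨-, rfl⟩ | rfl
    · rfl
    · exact absurd ⟨q, hq⟩ hK
  rw [hca] at hq
  have hjump : A.Step (replicate (K + 1) a ++ [b], p) (b :: replicate K a, q) := by
    simpa [replicate_succ'] using Step.jump (A := A) [b] (replicate K a) hq
      (by simpa using hK)
  have hpop : A.Step (b :: replicate (K + 1) a, p) (b :: replicate K a, q) := by
    simpa [replicate_succ'] using A.step_append_singleton (u := b :: replicate K a) hq
  have hmem : (b :: replicate (K + 1) a) ++ replicate K b ∈ A.language :=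
    mem_language_iff.mpr <|
      .of_reflTransGen_left ((hrun _).tail hpop) (hacc.of_reflTransGen (.single hjump))
  exact cons_not_mem_dyck hab _ (hA ▸ hmem)

end LOWJFA

theorem stmt_5 : ¬ LOWJ (Dyck AB.a AB.b) := by
  rintro ⟨σ, _, A, hA⟩
  have hab : AB.a ≠ AB.b := nofun
  by_cases h : ∀ k, AB.b ∈ A.sig ((A.next AB.b)^[k] A.start)
  · exact LOWJFA.language_ne_dyck_of_forall_mem_sig_next hab h hA
  · classical
    have hex : ∃ k, AB.b ∉ A.sig ((A.next AB.b)^[k] A.start) := not_forall.mp h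
    exact LOWJFA.language_ne_dyck_of_not_mem_sig_next hab
      (fun i hi => not_not.mp (Nat.find_min hex hi)) (Nat.find_spec hex) hA
end

section
/- For every language L1 accepted by a GRLOWJFA there exists a GLLOWJFA accepting the reversal L1^R, and conversely; moreover the construction is: replace each rule (p,w,q) by (q,w^R,p) (keeping states, start state, and final states the same). -/
open List

/-!
Reversing every word turns a configuration `t p v` of a GRLOWJFA into the configuration
`vᴿ p tᴿ` of the GLLOWJFA with reversed rules, and maps each step of the one automaton to a step
of the other: reversal swaps prefixes and suffixes, so it preserves the side conditions (no
subword from `Σ_{R,p}`, no overlap of a suffix of `u` with a prefix of `x`). The initial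
configuration `ε s w` corresponds to `wᴿ s ε` and the final ones are fixed, so the languages
are reverses of each other.
-/

section Reversal

variable {α σ : Type}

def revRule : σ × List α × σ → σ × List α × σ
  | (p, w, q) => (q, w.reverse, p)

def revConfig : List α × σ × List α → List α × σ × List α
  | (t, p, v) => (v.reverse, p, t.reverse)

theorem revRule_involutive : Function.Involutive (revRule (α := α) (σ := σ)) := by
  rintro ⟨p, w, q⟩
  simp [revRule]

theorem mem_image_revRule {S : Set (σ × List α × σ)} {r : σ × List α × σ} :
    r ∈ revRule '' S ↔ revRule r ∈ S := by
  rw [revRule_involutive.image_eq_preimage_symm, Set.mem_preimage]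

theorem noSub_setOf_reverse_iff (S : Set (List α)) (u : List α) :
    NoSub {w | w.reverse ∈ S} u ↔ NoSub S u.reverse := by
  refine not_congr ⟨fun ⟨w, hw, hwu⟩ ↦ ⟨w.reverse, hw, List.reverse_infix.mpr hwu⟩,
    fun ⟨w, hw, hwu⟩ ↦ ⟨w.reverse, by simpa using hw, ?_⟩⟩
  simpa using List.reverse_infix.mpr hwu

theorem exists_overlap_iff_reverse (u x : List α) :
    (∃ u₂ x₁ : List α, u₂ ≠ [] ∧ x₁ ≠ [] ∧ u₂ <:+ u ∧ x₁ <+: x ∧ u₂ ++ x₁ = x) ↔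
      ∃ x₂ u₁ : List α, x₂ ≠ [] ∧ u₁ ≠ [] ∧ x₂ <:+ x.reverse ∧ u₁ <+: u.reverse ∧
        x₂ ++ u₁ = x.reverse := by
  constructor
  · rintro ⟨u₂, x₁, hu₂, hx₁, hsuf, hpre, rfl⟩
    exact ⟨x₁.reverse, u₂.reverse, by simpa using hx₁, by simpa using hu₂,
      List.reverse_suffix.mpr hpre, List.reverse_prefix.mpr hsuf, by simp⟩
  · rintro ⟨x₂, u₁, hx₂, hu₁, hsuf, hpre, hx⟩
    rw [← List.reverse_eq_iff] at hx
    subst hx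
    exact ⟨u₁.reverse, x₂.reverse, by simpa using hu₁, by simpa using hx₂,
      by simpa using List.reverse_suffix.mpr hpre, by simpa using List.reverse_prefix.mpr hsuf,
      by simp⟩

def GRLOWJFA.reverse (A : GRLOWJFA α σ) : GLLOWJFA α σ where
  start := A.start
  accept := A.accept
  rules := revRule '' A.rules
  finite := A.finite.image _
  ne := by
    rintro ⟨q, w, p⟩ hr
    simpa [revRule] using A.ne _ (mem_image_revRule.mp hr)
  det p w q q' hq hq' :=
    A.det p w.reverse q q' (mem_image_revRule.mp hq) (mem_image_revRule.mp hq')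

def GLLOWJFA.reverse (A : GLLOWJFA α σ) : GRLOWJFA α σ where
  start := A.start
  accept := A.accept
  rules := revRule '' A.rules
  finite := A.finite.image _
  ne := by
    rintro ⟨p, w, q⟩ hr
    simpa [revRule] using A.ne _ (mem_image_revRule.mp hr)
  det p w q q' hq hq' :=
    A.det p w.reverse q q' (mem_image_revRule.mp hq) (mem_image_revRule.mp hq')

variable {A1 : GRLOWJFA α σ} {A2 : GLLOWJFA α σ}

theorem GLLOWJFA.sig_eq_of_rules_eq (hr : A2.rules = revRule '' A1.rules) (p : σ) :
    A2.sig p = {w | w.reverse ∈ A1.sig p} := by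
  ext w
  simp only [GLLOWJFA.sig, GRLOWJFA.sig, hr, mem_image_revRule]
  rfl

theorem GRLOWJFA.Step.reverse (hr : A2.rules = revRule '' A1.rules)
    {c c' : List α × σ × List α} (h : A1.Step c c') :
    A2.Step (revConfig c) (revConfig c') := by
  have hsig := GLLOWJFA.sig_eq_of_rules_eq hr
  cases h with
  | @rule p q x t u v hx hu hov =>
    have hx' : (q, x.reverse, p) ∈ A2.rules := by
      rw [hr, mem_image_revRule]
      simpa [revRule] using hx
    have hu' : NoSub (A2.sig p) u.reverse := by
      rwa [hsig, noSub_setOf_reverse_iff, List.reverse_reverse]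
    simpa [revConfig] using GLLOWJFA.Step.rule t.reverse u.reverse v.reverse hx' hu'
      (mt (exists_overlap_iff_reverse u x).mpr hov)
  | @ret p x y hx hy =>
    have hy' : NoSub (A2.sig p) y.reverse := by
      rwa [hsig, noSub_setOf_reverse_iff, List.reverse_reverse]
    simpa [revConfig] using GLLOWJFA.Step.ret x.reverse y.reverse (by simpa using hx) hy'

theorem GLLOWJFA.Step.reverse (hr : A2.rules = revRule '' A1.rules)
    {c c' : List α × σ × List α} (h : A2.Step c c') :
    A1.Step (revConfig c) (revConfig c') := by
  have hsig := GLLOWJFA.sig_eq_of_rules_eq hr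
  cases h with
  | @rule p q x t u v hx hu hov =>
    have hx' : (p, x.reverse, q) ∈ A1.rules := by
      rw [hr, mem_image_revRule] at hx
      simpa [revRule] using hx
    have hu' : NoSub (A1.sig p) u.reverse := by
      rwa [hsig, noSub_setOf_reverse_iff] at hu
    have hov' := mt (exists_overlap_iff_reverse u.reverse x.reverse).mp
    simp only [List.reverse_reverse] at hov'
    simpa [revConfig] using GRLOWJFA.Step.rule t.reverse u.reverse v.reverse hx' hu' (hov' hov)
  | @ret p x y hx hy =>
    have hy' : NoSub (A1.sig p) y.reverse := by
      rwa [hsig, noSub_setOf_reverse_iff] at hy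
    simpa [revConfig] using GRLOWJFA.Step.ret x.reverse y.reverse (by simpa using hx) hy'

theorem GLLOWJFA.language_eq_reverse (hs : A2.start = A1.start) (ha : A2.accept = A1.accept)
    (hr : A2.rules = revRule '' A1.rules) :
    A2.language = {w | w.reverse ∈ A1.language} := by
  ext w
  simp only [GLLOWJFA.language, GRLOWJFA.language, Set.mem_ofPred_eq, hs, ha]
  refine exists_congr fun qf ↦ and_congr_right fun _ ↦ ⟨fun h ↦ ?_, fun h ↦ ?_⟩
  · simpa [revConfig, Function.onFun] using h.lift revConfig fun _ _ ↦ GLLOWJFA.Step.reverse hr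
  · simpa [revConfig, Function.onFun] using h.lift revConfig fun _ _ ↦ GRLOWJFA.Step.reverse hr

end Reversal

theorem stmt_6 :
    (∀ (α : Type) (L : Set (List α)), GRLOWJ L → GLLOWJ {w | w.reverse ∈ L}) ∧
    (∀ (α : Type) (L : Set (List α)), GLLOWJ L → GRLOWJ {w | w.reverse ∈ L}) ∧
    (∀ (α σ : Type) (A1 : GRLOWJFA α σ) (A2 : GLLOWJFA α σ),
      A2.start = A1.start → A2.accept = A1.accept →
      A2.rules = {r | ∃ p w q, (p, w, q) ∈ A1.rules ∧ r = (q, w.reverse, p)} →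
      A2.language = {w | w.reverse ∈ A1.language}) := by
  refine ⟨?_, ?_, ?_⟩
  · rintro α L ⟨σ, hσ, A, rfl⟩
    exact ⟨σ, hσ, A.reverse, GLLOWJFA.language_eq_reverse rfl rfl rfl⟩
  · rintro α L ⟨σ, hσ, A, rfl⟩
    have h : A.language = {w | w.reverse ∈ A.reverse.language} :=
      GLLOWJFA.language_eq_reverse rfl rfl <| by
        ext r
        change r ∈ A.rules ↔ r ∈ revRule '' (revRule '' A.rules)
        rw [mem_image_revRule, mem_image_revRule, revRule_involutive r]
    refine ⟨σ, hσ, A.reverse, ?_⟩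
    simp [h]
  · intro α σ A1 A2 hs ha hr
    refine GLLOWJFA.language_eq_reverse hs ha (hr.trans ?_)
    ext ⟨q, w, p⟩
    simp [revRule, eq_comm]
end

section
/- Given GRLOWJFA A1=(Σ,Q,q0,F,R) and GLLOWJFA A2=(Σ,Q,q0,F,R') with R'={(q,w^R,p) : (p,w,q)∈R}, for all x,y,z∈Σ*, u∈Σ⁺, and states p,q: x p y u z ↷_{A1} x y q z if and only if z^R q y^R x^R ↶_{A2} z^R u^R y^R p x^R. -/
open List

section Aux
variable {α σ : Type}

lemma grl_inv (A1 : GRLOWJFA α σ) (x y z u : List α) (p q : σ)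
    (h : GRLOWJFA.Step A1 (x, p, y ++ u ++ z) (x ++ y, q, z)) :
    (p, u, q) ∈ A1.rules ∧ NoSub (A1.sig p) y ∧
      ¬ ∃ u₂ x₁ : List α, u₂ ≠ [] ∧ x₁ ≠ [] ∧ u₂ <:+ y ∧ x₁ <+: u ∧ u₂ ++ x₁ = u := by
  generalize e1 : (x, p, y ++ u ++ z) = s at h
  generalize e2 : (x ++ y, q, z) = t at h
  cases h with
  | rule t' u' v' hr hns hno =>
    simp only [Prod.mk.injEq] at e1 e2
    obtain ⟨rfl, rfl, e1⟩ := e1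
    obtain ⟨e2, rfl, rfl⟩ := e2
    have hu' : u' = y := (List.append_cancel_left e2).symm
    subst hu'
    rw [List.append_assoc, List.append_assoc] at e1
    have := List.append_cancel_left e1
    have hx : u = _ := List.append_cancel_right this
    subst hx
    exact ⟨hr, hns, hno⟩
  | ret x' y' hx hns =>
    simp only [Prod.mk.injEq] at e1 e2
    obtain ⟨rfl, rfl, e1⟩ := e1
    obtain ⟨e2, rfl, rfl⟩ := e2
    exact absurd (List.append_eq_nil_iff.mp e2).1 hx

lemma gll_inv (A2 : GLLOWJFA α σ) (x y z u : List α) (p q : σ)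
    (h : GLLOWJFA.Step A2 (z ++ u ++ y, p, x) (z, q, y ++ x)) :
    (q, u, p) ∈ A2.rules ∧ NoSub (A2.sig p) y ∧
      ¬ ∃ x₂ u₁ : List α, x₂ ≠ [] ∧ u₁ ≠ [] ∧ x₂ <:+ u ∧ u₁ <+: y ∧ x₂ ++ u₁ = u := by
  generalize e1 : (z ++ u ++ y, p, x) = s at h
  generalize e2 : (z, q, y ++ x) = t at h
  cases h with
  | rule t' u' v' hr hns hno =>
    simp only [Prod.mk.injEq] at e1 e2
    obtain ⟨e1, rfl, rfl⟩ := e1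
    obtain ⟨rfl, rfl, e2⟩ := e2
    have hu' : u' = y := (List.append_cancel_right e2).symm
    subst hu'
    have hx : u = _ := List.append_cancel_right (List.append_cancel_left
      (by simpa only [List.append_assoc] using e1))
    subst hx
    exact ⟨hr, hns, hno⟩
  | ret x' y' hx hns =>
    simp only [Prod.mk.injEq] at e1 e2
    obtain ⟨rfl, rfl, rfl⟩ := e1
    obtain ⟨-, rfl, e2⟩ := e2
    exact absurd (List.append_eq_nil_iff.mp e2).2 hx

end Aux

theorem stmt_7 {α σ : Type} (A1 : GRLOWJFA α σ) (A2 : GLLOWJFA α σ)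
    (hR : A2.rules = {r | ∃ p w q, (p, w, q) ∈ A1.rules ∧ r = (q, w.reverse, p)})
    (x y z u : List α) (hu : u ≠ []) (p q : σ) :
    GRLOWJFA.Step A1 (x, p, y ++ u ++ z) (x ++ y, q, z) ↔
    GLLOWJFA.Step A2 (z.reverse ++ u.reverse ++ y.reverse, p, x.reverse)
      (z.reverse, q, y.reverse ++ x.reverse) := by
  constructor
  · intro h
    obtain ⟨hr, hns, hno⟩ := grl_inv A1 x y z u p q h
    refine GLLOWJFA.Step.rule (A := A2) (x := u.reverse)
      x.reverse y.reverse z.reverse ?_ ?_ ?_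
    · rw [hR]; exact ⟨p, u, q, hr, rfl⟩
    · rintro ⟨w, ⟨q', hq'⟩, hinf⟩
      rw [hR] at hq'
      obtain ⟨p', w', q'', hw', heq⟩ := hq'
      obtain ⟨rfl, rfl, rfl⟩ : q' = q'' ∧ w = w'.reverse ∧ p = p' := by
        simpa using heq
      exact hns ⟨w', ⟨q', hw'⟩, List.reverse_infix.mp (by simpa using hinf)⟩
    · rintro ⟨x₂, u₁, hx₂, hu₁, hsuf, hpre, heq⟩
      refine hno ⟨u₁.reverse, x₂.reverse, by simpa, by simpa, ?_, ?_, ?_⟩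
      · rw [show y = y.reverse.reverse from (List.reverse_reverse y).symm]
        exact List.reverse_suffix.mpr hpre
      · rw [show u = u.reverse.reverse from (List.reverse_reverse u).symm]
        exact List.reverse_prefix.mpr hsuf
      · simpa using congrArg List.reverse heq
  · intro h
    obtain ⟨hr, hns, hno⟩ := gll_inv A2 x.reverse y.reverse z.reverse u.reverse p q h
    rw [hR] at hr
    obtain ⟨p', w', q'', hw', heq⟩ := hr
    obtain ⟨rfl, hw, rfl⟩ : q = q'' ∧ u.reverse = w'.reverse ∧ p = p' := by
      simpa using heq
    obtain rfl : u = w' := by simpa using congrArg List.reverse hw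
    refine GRLOWJFA.Step.rule (A := A1) (x := u) x y z hw' ?_ ?_
    · rintro ⟨w, ⟨q', hq'⟩, hinf⟩
      exact hns ⟨w.reverse, ⟨q', by rw [hR]; exact ⟨p, w, q', hq', rfl⟩⟩,
        List.reverse_infix.mpr hinf⟩
    · rintro ⟨u₂, x₁, hu₂, hx₁, hsuf, hpre, heq2⟩
      refine hno ⟨x₁.reverse, u₂.reverse, by simpa, by simpa, ?_, ?_, ?_⟩
      · exact List.reverse_suffix.mpr hpre
      · exact List.reverse_prefix.mpr hsuf
      · simpa using congrArg List.reverse heq2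
end

section
/- The language { a^n b^n : n ≥ 0 } is not accepted by any GRLOWJFA. -/
open List

/-!
A run on `a ^ n ++ b ^ n` that ever applies a rule behind a nonempty skipped word `u` must jump
over `a`s onto a word containing a `b`; after that the tape holds only `b`s, so the run reads
some of them at the front and returns `u` to the front. Applying the skipping rule at the front
instead yields an accepting run on a word with a `b` before an `a`. Hence every `a ^ n ++ b ^ n`
is read entirely at the front by rule words of bounded length, and a pigeonhole on the state at
the last rule boundary inside `a ^ n`, together with its distance to the end of `a ^ n`, crosses
two of these readings into an accepting run on `a ^ n ++ b ^ n'` with `n ≠ n'`.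
-/

namespace GRLOWJFA

variable {α σ : Type}

def Overlaps (u x : List α) : Prop :=
  ∃ u₂ x₁ : List α, u₂ ≠ [] ∧ x₁ ≠ [] ∧ u₂ <:+ u ∧ x₁ <+: x ∧ u₂ ++ x₁ = x

variable (A : GRLOWJFA α σ)

/-- Runs that apply every rule at the front of the tape, never skipping anything. -/
inductive Reads : σ → List α → σ → Prop
  | nil (p : σ) : Reads p [] p
  | cons {p q r : σ} {x w : List α} : (p, x, q) ∈ A.rules → Reads q w r → Reads p (x ++ w) r

variable {A}

theorem noSub_sig_nil (p : σ) : NoSub (A.sig p) [] := by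
  rintro ⟨w, ⟨q, hq⟩, hw⟩
  exact A.ne _ hq (List.infix_nil.1 hw)

theorem Step.front {p q : σ} {x : List α} (hr : (p, x, q) ∈ A.rules) (v : List α) :
    A.Step ([], p, x ++ v) ([], q, v) := by
  simpa using Step.rule [] [] v hr (noSub_sig_nil p)
    fun ⟨_, _, hu₂, _, hsuf, _⟩ => hu₂ (List.suffix_nil.1 hsuf)

theorem Reads.run {p q : σ} {w : List α} (h : A.Reads p w q) (v : List α) :
    Relation.ReflTransGen A.Step ([], p, w ++ v) ([], q, v) := by
  induction h with
  | nil => rfl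
  | cons hr _ ih => simpa using Relation.ReflTransGen.head (Step.front hr _) ih

theorem Reads.append {p q r : σ} {w w' : List α} (h : A.Reads p w q) (h' : A.Reads q w' r) :
    A.Reads p (w ++ w') r := by
  induction h with
  | nil => simpa using h'
  | cons hr _ ih => simpa using Reads.cons hr (ih h')

theorem Reads.exists_split {K : ℕ} (hK : ∀ r ∈ A.rules, r.2.1.length ≤ K) {p q : σ}
    {s t : List α} (h : A.Reads p (s ++ t) q) :
    ∃ s₁ s₂ r, s = s₁ ++ s₂ ∧ s₂.length ≤ K ∧ A.Reads p s₁ r ∧ A.Reads r (s₂ ++ t) q := by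
  generalize hst : s ++ t = w at h
  induction h generalizing s with
  | nil p =>
    obtain ⟨rfl, rfl⟩ := List.append_eq_nil_iff.1 hst
    exact ⟨[], [], p, rfl, Nat.zero_le _, .nil p, .nil p⟩
  | @cons p q' r x w hr hw ih =>
    rcases List.append_eq_append_iff.1 hst with ⟨x', rfl, rfl⟩ | ⟨s', rfl, rfl⟩
    · refine ⟨[], s, p, rfl, ?_, .nil p, by simpa using Reads.cons hr hw⟩
      have := hK _ hr
      simp only [List.length_append] at this
      omega
    · obtain ⟨s₁, s₂, r', rfl, hlen, h₁, h₂⟩ := ih (s := s') rfl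
      exact ⟨x ++ s₁, s₂, r', by simp, hlen, .cons hr h₁, h₂⟩

theorem exists_reads_replicate_append_ne [Finite σ] {c : α} {f : ℕ → List α}
    (h : ∀ n, ∃ qf ∈ A.accept, A.Reads A.start (List.replicate n c ++ f n) qf) :
    ∃ n n', n ≠ n' ∧ ∃ qf ∈ A.accept, A.Reads A.start (List.replicate n c ++ f n') qf := by
  obtain ⟨K, hK⟩ := (A.finite.image fun r => r.2.1.length).bddAbove
  have hsplit : ∀ n, ∃ (r : σ) (d : Fin (K + 1)) (s : List α),
      List.replicate n c = s ++ List.replicate d c ∧ A.Reads A.start s r ∧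
      ∃ qf ∈ A.accept, A.Reads r (List.replicate d c ++ f n) qf := by
    intro n
    obtain ⟨qf, hqf, hn⟩ := h n
    obtain ⟨s₁, s₂, r, hs, hlen, h₁, h₂⟩ :=
      hn.exists_split fun r hr => hK (Set.mem_image_of_mem _ hr)
    have hs₂ : s₂ = List.replicate s₂.length c :=
      List.eq_replicate_iff.2 ⟨rfl, fun y hy =>
        List.eq_of_mem_replicate (hs ▸ List.mem_append_right s₁ hy)⟩
    exact ⟨r, ⟨s₂.length, Nat.lt_succ_of_le hlen⟩, s₁, hs₂ ▸ hs, h₁, qf, hqf, hs₂ ▸ h₂⟩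
  choose r d s hs hreads hrest using hsplit
  obtain ⟨n, n', hne, hrd⟩ := Finite.exists_ne_map_eq_of_infinite fun n => (r n, d n)
  simp only [Prod.mk.injEq] at hrd
  obtain ⟨hr, hd⟩ := hrd
  obtain ⟨qf, hqf, hn'⟩ := hrest n'
  refine ⟨n, n', hne, qf, hqf, ?_⟩
  rw [hs n, List.append_assoc, hd]
  exact (hreads n).append (hr ▸ hn')

/-- If `x` were `c ^ m`, then for `m = 1` it would be an infix of `u`, and for `m ≥ 2` the last
`c` of `u` followed by `c ^ (m - 1)` would be an overlap. -/
theorem exists_mem_ne_of_rule {p q : σ} {u x : List α} {c : α} (hr : (p, x, q) ∈ A.rules)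
    (hu : NoSub (A.sig p) u) (hov : ¬ Overlaps u x) (hc : [c] <:+ u) : ∃ y ∈ x, y ≠ c := by
  by_contra! hx
  obtain ⟨m, rfl⟩ : ∃ m, x = List.replicate m c :=
    ⟨x.length, List.eq_replicate_iff.2 ⟨rfl, hx⟩⟩
  match m, hr with
  | 0, hr => exact A.ne _ hr rfl
  | 1, hr => exact hu ⟨_, ⟨q, hr⟩, hc.isInfix⟩
  | m + 2, _ =>
    refine hov ⟨[c], List.replicate (m + 1) c, by simp, by simp, hc, ?_, rfl⟩
    exact ⟨[c], (List.replicate_succ' ..).symm⟩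

theorem reads_or_skip {p qf : σ} {w : List α}
    (h : Relation.ReflTransGen A.Step ([], p, w) ([], qf, [])) :
    A.Reads p w qf ∨ ∃ w₁ u x v r q, w = w₁ ++ u ++ x ++ v ∧ A.Reads p w₁ r ∧
      (r, x, q) ∈ A.rules ∧ u ≠ [] ∧ NoSub (A.sig r) u ∧ ¬ Overlaps u x ∧
      Relation.ReflTransGen A.Step (u, q, v) ([], qf, []) := by
  generalize hc : (([] : List α), p, w) = c at h
  induction h using Relation.ReflTransGen.head_induction_on generalizing p w with
  | refl =>
    obtain ⟨rfl, rfl⟩ : p = qf ∧ w = [] := by simpa using hc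
    exact .inl (.nil p)
  | head hstep hrun ih =>
    subst hc
    cases hstep with
    | ret x y hx => exact absurd rfl hx
    | @rule _ q x _ u v hr hu hov =>
      by_cases hu₀ : u = []
      · subst hu₀
        rcases ih (p := q) (w := v) (by simp) with hv | ⟨w₁, u', x', v', r', q', rfl, h₁, hrest⟩
        · exact .inl (by simpa using Reads.cons hr hv)
        · exact .inr ⟨x ++ w₁, u', x', v', r', q', by simp, by simpa using Reads.cons hr h₁, hrest⟩
      · exact .inr ⟨[], u, x, v, p, q, by simp, .nil p, hr, hu₀, hu, hov, by simpa using hrun⟩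

theorem reads_then_ret {c : α} {q qf : σ} {t y : List α} (ht : t ≠ []) (hy : ∀ z ∈ y, z = c)
    (h : Relation.ReflTransGen A.Step (t, q, y) ([], qf, [])) :
    ∃ y₁ y₂ s, y = y₁ ++ y₂ ∧ A.Reads q y₁ s ∧
      Relation.ReflTransGen A.Step ([], s, t ++ y₂) ([], qf, []) := by
  generalize hc : (t, q, y) = c at h
  induction h using Relation.ReflTransGen.head_induction_on generalizing t q y with
  | refl => exact absurd (congrArg Prod.fst hc) ht
  | head hstep hrun ih =>
    subst hc
    cases hstep with
    | ret _ _ => exact ⟨[], y, q, rfl, .nil q, hrun⟩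
    | @rule _ q' x _ u v hr hu hov =>
      obtain rfl : u = [] := by
        refine (List.eq_nil_or_concat' u).resolve_right ?_
        rintro ⟨u', c', rfl⟩
        obtain ⟨z, hz, hzc⟩ := exists_mem_ne_of_rule hr hu hov (List.suffix_append u' [c'])
        exact hzc ((hy z (by simp [hz])).trans (hy c' (by simp)).symm)
      obtain ⟨y₁, y₂, s, rfl, h₁, h₂⟩ :=
        ih (t := t ++ []) (q := q') (y := v) (by simpa using ht)
          (fun z hz => hy z (by simp [hz])) rfl
      exact ⟨x ++ y₁, y₂, s, by simp, .cons hr h₁, by simpa using h₂⟩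

end GRLOWJFA

open GRLOWJFA

def anbn : Set (List AB) :=
  {w | ∃ n : ℕ, w = List.replicate n AB.a ++ List.replicate n AB.b}

def NoBBeforeA (w : List AB) : Prop :=
  w.Pairwise fun y z => y = AB.a ∨ z = AB.b

theorem noBBeforeA_of_mem_anbn {w : List AB} (hw : w ∈ anbn) : NoBBeforeA w := by
  obtain ⟨n, rfl⟩ := hw
  refine List.pairwise_append.2 ⟨?_, ?_, fun y hy _ _ => .inl (List.eq_of_mem_replicate hy)⟩
  · exact List.pairwise_replicate.2 (.inr (.inl rfl))
  · exact List.pairwise_replicate.2 (.inr (.inr rfl))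

theorem eq_of_replicate_append_mem_anbn {n n' : ℕ}
    (h : List.replicate n AB.a ++ List.replicate n' AB.b ∈ anbn) : n = n' := by
  obtain ⟨m, hm⟩ := h
  have ha := congrArg (List.count AB.a) hm
  have hb := congrArg (List.count AB.b) hm
  simp [List.count_replicate] at ha hb
  omega

theorem reads_of_language_eq_anbn {σ : Type} {A : GRLOWJFA AB σ} (hL : A.language = anbn)
    {w : List AB} (hw : w ∈ anbn) : ∃ qf ∈ A.accept, A.Reads A.start w qf := by
  obtain ⟨qf, hqf, hrun⟩ := hL ▸ hw
  rcases reads_or_skip hrun with h | ⟨w₁, u, x, v, r, q, rfl, h₁, hr, hu₀, hu, hov, hrest⟩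
  · exact ⟨qf, hqf, h⟩
  exfalso
  obtain ⟨u', c, rfl⟩ := (List.eq_nil_or_concat' u).resolve_left hu₀
  obtain ⟨y, hyx, hyc⟩ := exists_mem_ne_of_rule hr hu hov (List.suffix_append u' [c])
  have hsorted : NoBBeforeA (u' ++ [c] ++ x ++ v) :=
    (noBBeforeA_of_mem_anbn hw).sublist (by simp)
  have hcy : c = AB.a ∧ y = AB.b := by
    have := List.pairwise_append.1 (List.pairwise_append.1 hsorted).1 |>.2.2 c (by simp) y hyx
    cases c <;> cases y <;> simp_all
  have hv : ∀ z ∈ v, z = AB.b := fun z hz => by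
    simpa [hcy.2] using (List.pairwise_append.1 hsorted).2.2 y (by simp [hyx]) z hz
  obtain ⟨v₁, v₂, s, rfl, hv₁, hret⟩ := reads_then_ret hu₀ hv hrest
  have hacc : w₁ ++ (x ++ v₁) ++ (u' ++ [c] ++ v₂) ∈ anbn :=
    hL ▸ ⟨qf, hqf, ((h₁.append (.cons hr hv₁)).run _).trans (by simpa using hret)⟩
  have := List.pairwise_append.1 (noBBeforeA_of_mem_anbn hacc) |>.2.2 y (by simp [hyx])
    c (by simp)
  simp [hcy] at this

theorem stmt_16 :
    ¬ GRLOWJ {w : List AB | ∃ n : ℕ,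
      w = List.replicate n AB.a ++ List.replicate n AB.b} := by
  rintro ⟨σ, _, A, hL⟩
  change A.language = anbn at hL
  obtain ⟨n, n', hne, qf, hqf, h⟩ := A.exists_reads_replicate_append_ne fun n =>
    reads_of_language_eq_anbn hL ⟨n, rfl⟩
  exact hne (eq_of_replicate_append_mem_anbn (hL ▸ ⟨qf, hqf, by simpa using h.run []⟩))
end
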